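/- arXiv:2512.06070 — 3 statements merged into one kernel-verified Lean document; each statement's English description precedes it below -/
import Mathlib

section
/- Let g = k ⊕ m be a Cartan decomposition, let b ⊆ m be an Abelian Lie subalgebra, and let H ∈ m_r (the subspace of m commuting with b_1,...,b_{r-1}). If K is an element of the group generated by exp(k_r) (elements of k that commute with b_1,...,b_{r-1}) that is a critical point of the function K ↦ ⟨K b_r K†, H⟩, then the conjugate K† H K commutes with b_j for all j ≤ r; in particular K† H K lies in m_{r+1}. -/
open Matrix

open scoped ComplexOrder in
lemma trace_self_mul_conjTranspose_eq_zero' {N : Type*} [Fintype N]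
    {A : Matrix N N ℂ} (h : Matrix.trace (A * Aᴴ) = 0) : A = 0 := by
  have h' : ∑ i, dotProduct (A i) (star (A i)) = 0 := by
    simpa [Matrix.trace, Matrix.diag, Matrix.mul_apply, dotProduct,
      Matrix.conjTranspose_apply] using h
  have h2 := (Fintype.sum_eq_zero_iff_of_nonneg
    (fun i => dotProduct_self_star_nonneg (A i))).mp h'
  ext i j
  have h3 : dotProduct (A i) (star (A i)) = 0 := congrFun h2 i
  have h4 : A i = 0 := dotProduct_self_star_eq_zero.mp h3
  simpa using congrFun h4 j

lemma exp_skew_unitary' {N : Type*} [Fintype N] [DecidableEq N]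
    {X : Matrix N N ℂ} (h : Xᴴ = -X) :
    (NormedSpace.exp X)ᴴ = NormedSpace.exp (-X) ∧
      NormedSpace.exp X * NormedSpace.exp (-X) = 1 ∧
      NormedSpace.exp (-X) * NormedSpace.exp X = 1 := by
  refine ⟨?_, ?_, ?_⟩
  · rw [← h, Matrix.exp_conjTranspose]
  · rw [← Matrix.exp_add_of_commute X (-X) ((Commute.refl X).neg_right), add_neg_cancel,
      NormedSpace.exp_zero]
  · rw [← Matrix.exp_add_of_commute (-X) X ((Commute.refl X).neg_left), neg_add_cancel,
      NormedSpace.exp_zero]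

set_option maxHeartbeats 1000000 in
set_option synthInstance.maxHeartbeats 200000 in
lemma exp_conj_mem_of_adInvariant' {N : Type*} [Fintype N] [DecidableEq N]
    (S : Submodule ℝ (Matrix N N ℂ)) (X : Matrix N N ℂ)
    (hX : ∀ Z ∈ S, X * Z - Z * X ∈ S) {M : Matrix N N ℂ} (hM : M ∈ S) :
    NormedSpace.exp X * M * NormedSpace.exp (-X) ∈ S := by
  letI : SeminormedRing (Matrix N N ℂ) := Matrix.linftyOpSemiNormedRing
  letI : NormedRing (Matrix N N ℂ) := Matrix.linftyOpNormedRing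
  letI : NormedAlgebra ℂ (Matrix N N ℂ) := Matrix.linftyOpNormedAlgebra
  letI : NormedAlgebra ℝ (Matrix N N ℂ) := Matrix.linftyOpNormedAlgebra
  letI : NormedAlgebra ℚ (Matrix N N ℂ) := NormedAlgebra.restrictScalars ℚ ℂ (Matrix N N ℂ)
  letI : TopologicalSpace (Matrix N N ℂ) := PseudoMetricSpace.toUniformSpace.toTopologicalSpace
  haveI : CompleteSpace (Matrix N N ℂ) := FiniteDimensional.complete ℂ (Matrix N N ℂ)
  letI : NormedAlgebra ℚ (Matrix N N ℂ →L[ℂ] Matrix N N ℂ) :=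
    NormedAlgebra.restrictScalars ℚ ℂ (Matrix N N ℂ →L[ℂ] Matrix N N ℂ)
  haveI : CompleteSpace (Matrix N N ℂ →L[ℂ] Matrix N N ℂ) :=
    FiniteDimensional.complete ℂ (Matrix N N ℂ →L[ℂ] Matrix N N ℂ)
  -- left and right multiplication as continuous linear maps
  let lmₗ : Matrix N N ℂ →ₗ[ℂ] (Matrix N N ℂ →L[ℂ] Matrix N N ℂ) :=
    { toFun := fun Y => LinearMap.toContinuousLinearMap (LinearMap.mulLeft ℂ Y)
      map_add' := fun Y Z => ContinuousLinearMap.ext fun W =>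
        show (Y + Z) * W = Y * W + Z * W from add_mul Y Z W
      map_smul' := fun c Y => ContinuousLinearMap.ext fun W =>
        show (c • Y) * W = c • (Y * W) from smul_mul_assoc c Y W }
  let rmₗ : Matrix N N ℂ →ₗ[ℂ] (Matrix N N ℂ →L[ℂ] Matrix N N ℂ) :=
    { toFun := fun Y => LinearMap.toContinuousLinearMap (LinearMap.mulRight ℂ Y)
      map_add' := fun Y Z => ContinuousLinearMap.ext fun W =>
        show W * (Y + Z) = W * Y + W * Z from mul_add W Y Z
      map_smul' := fun c Y => ContinuousLinearMap.ext fun W =>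
        show W * (c • Y) = c • (W * Y) from mul_smul_comm c W Y }
  have lm_apply : ∀ Y W : Matrix N N ℂ, lmₗ Y W = Y * W := fun _ _ => rfl
  have rm_apply : ∀ Y W : Matrix N N ℂ, rmₗ Y W = W * Y := fun _ _ => rfl
  let φ : Matrix N N ℂ →+* (Matrix N N ℂ →L[ℂ] Matrix N N ℂ) :=
    { toFun := fun Y => lmₗ Y
      map_one' := ContinuousLinearMap.ext fun W =>
        show (1 : Matrix N N ℂ) * W = W from one_mul W
      map_mul' := fun Y Z => ContinuousLinearMap.ext fun W =>
        show (Y * Z) * W = Y * (Z * W) from mul_assoc Y Z W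
      map_zero' := ContinuousLinearMap.ext fun W =>
        show (0 : Matrix N N ℂ) * W = 0 from zero_mul W
      map_add' := fun Y Z => map_add lmₗ Y Z }
  let ψ : (Matrix N N ℂ)ᵐᵒᵖ →+* (Matrix N N ℂ →L[ℂ] Matrix N N ℂ) :=
    { toFun := fun Y => rmₗ Y.unop
      map_one' := ContinuousLinearMap.ext fun W =>
        show W * (1 : Matrix N N ℂ) = W from mul_one W
      map_mul' := fun Y Z => ContinuousLinearMap.ext fun W =>
        show W * (Z.unop * Y.unop) = (W * Z.unop) * Y.unop from (mul_assoc W Z.unop Y.unop).symm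
      map_zero' := ContinuousLinearMap.ext fun W =>
        show W * (0 : Matrix N N ℂ) = 0 from mul_zero W
      map_add' := fun Y Z => map_add rmₗ Y.unop Z.unop }
  have hφc : Continuous φ := lmₗ.continuous_of_finiteDimensional
  have hψc : Continuous ψ := by
    have h : Continuous fun Y : (Matrix N N ℂ)ᵐᵒᵖ => rmₗ Y.unop :=
      rmₗ.continuous_of_finiteDimensional.comp MulOpposite.continuous_unop
    exact h
  have hφexp : ∀ Y : Matrix N N ℂ,
      NormedSpace.exp (lmₗ Y) = lmₗ (NormedSpace.exp Y) := fun Y =>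
    (NormedSpace.map_exp (𝔸 := Matrix N N ℂ)
      (𝔹 := Matrix N N ℂ →L[ℂ] Matrix N N ℂ) φ hφc Y).symm
  have hψexp : ∀ Y : Matrix N N ℂ,
      NormedSpace.exp (rmₗ Y) = rmₗ (NormedSpace.exp Y) := by
    intro Y
    have h1 := NormedSpace.map_exp (𝔸 := (Matrix N N ℂ)ᵐᵒᵖ)
      (𝔹 := Matrix N N ℂ →L[ℂ] Matrix N N ℂ) ψ hψc (MulOpposite.op Y)
    rw [NormedSpace.exp_op] at h1
    exact h1.symm
  have hcomm : Commute (lmₗ X) (rmₗ X) := ContinuousLinearMap.ext fun W =>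
    show X * (W * X) = (X * W) * X from (mul_assoc X W X).symm
  set D : Matrix N N ℂ →L[ℂ] Matrix N N ℂ := lmₗ X - rmₗ X with hD
  have hexpD : NormedSpace.exp D =
      lmₗ (NormedSpace.exp X) * rmₗ (NormedSpace.exp (-X)) := by
    rw [hD, sub_eq_add_neg,
      NormedSpace.exp_add_of_commute (𝔸 := Matrix N N ℂ →L[ℂ] Matrix N N ℂ)
        hcomm.neg_right,
      ← map_neg rmₗ, hφexp, hψexp]
  have happly : NormedSpace.exp D M =
      NormedSpace.exp X * M * NormedSpace.exp (-X) := by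
    rw [hexpD, ContinuousLinearMap.mul_apply, lm_apply, rm_apply, mul_assoc]
  have hDS : ∀ Z ∈ S, D Z ∈ S := fun Z hZ => by
    have h : D Z = X * Z - Z * X := by
      rw [hD, ContinuousLinearMap.sub_apply, lm_apply, rm_apply]
    rw [h]; exact hX Z hZ
  have hpow : ∀ n : ℕ, (D ^ n) M ∈ S := by
    intro n; induction n with
    | zero => simpa using hM
    | succ n ih =>
        rw [pow_succ', ContinuousLinearMap.mul_apply]
        exact hDS _ ih
  have hsum : HasSum (fun n : ℕ => (n.factorial : ℂ)⁻¹ • (D ^ n)) (NormedSpace.exp D) := by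
    have h := (NormedSpace.expSeries_summable' (𝕂 := ℂ) D).hasSum
    rw [NormedSpace.exp_eq_tsum ℂ]
    simpa using h
  let ev : (Matrix N N ℂ →L[ℂ] Matrix N N ℂ) →L[ℂ] Matrix N N ℂ :=
    LinearMap.toContinuousLinearMap
      { toFun := fun T => T M
        map_add' := fun T T' => rfl
        map_smul' := fun c T => rfl }
  have hsum2 : HasSum (fun n : ℕ => (n.factorial : ℂ)⁻¹ • ((D ^ n) M))
      (NormedSpace.exp D M) := by
    have h2 := ev.hasSum hsum
    simpa [ev, ContinuousLinearMap.smul_apply] using h2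
  have hclosed : IsClosed (S : Set (Matrix N N ℂ)) := Submodule.closed_of_finiteDimensional S
  have hmem : NormedSpace.exp D M ∈ S := by
    refine hclosed.mem_of_tendsto hsum2.tendsto_sum_nat
      (Filter.Eventually.of_forall fun n => ?_)
    refine Submodule.sum_mem S fun i _ => ?_
    have h5 : ((i.factorial : ℂ))⁻¹ = (((i.factorial : ℝ))⁻¹ : ℝ) := by
      push_cast; ring
    rw [h5, Complex.coe_smul]
    exact S.smul_mem _ (hpow i)
  rw [happly] at hmem; exact hmem

set_option maxHeartbeats 1000000 in
set_option synthInstance.maxHeartbeats 200000 in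
lemma deriv_trace_conj' {N : Type*} [Fintype N] [DecidableEq N] (X C H : Matrix N N ℂ) :
    deriv (fun t : ℝ => Matrix.trace (NormedSpace.exp ((t : ℂ) • X) * C *
      NormedSpace.exp ((t : ℂ) • (-X)) * H)) 0 = Matrix.trace ((X * C - C * X) * H) := by
  letI : SeminormedRing (Matrix N N ℂ) := Matrix.linftyOpSemiNormedRing
  letI : NormedRing (Matrix N N ℂ) := Matrix.linftyOpNormedRing
  letI : NormedAlgebra ℂ (Matrix N N ℂ) := Matrix.linftyOpNormedAlgebra
  letI : NormedAlgebra ℝ (Matrix N N ℂ) := Matrix.linftyOpNormedAlgebra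
  have hee : ∀ (Y : Matrix N N ℂ) (t : ℝ),
      NormedSpace.exp ((t : ℂ) • Y) = NormedSpace.exp (t • Y) := by
    intro Y t
    rw [Complex.coe_smul]
  letI : NormedAlgebra ℚ (Matrix N N ℂ) := NormedAlgebra.restrictScalars ℚ ℂ (Matrix N N ℂ)
  letI : TopologicalSpace (Matrix N N ℂ) := PseudoMetricSpace.toUniformSpace.toTopologicalSpace
  have hu : HasDerivAt (fun t : ℝ => NormedSpace.exp (t • X)) X 0 := by
    simpa [NormedSpace.exp_zero] using hasDerivAt_exp_smul_const (𝕂 := ℝ) X (0 : ℝ)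
  have hv : HasDerivAt (fun t : ℝ => NormedSpace.exp (t • (-X))) (-X) 0 := by
    simpa [NormedSpace.exp_zero] using hasDerivAt_exp_smul_const (𝕂 := ℝ) (-X) (0 : ℝ)
  have h1 : HasDerivAt
      (fun t : ℝ => NormedSpace.exp (t • X) * C * NormedSpace.exp (t • (-X)) * H)
      ((X * C + C * (-X)) * H) 0 := by
    have h2 := ((hu.mul_const C).mul hv).mul_const H
    simpa [NormedSpace.exp_zero] using h2
  let τ : Matrix N N ℂ →L[ℝ] ℂ :=
    LinearMap.toContinuousLinearMap (Matrix.traceLinearMap N ℝ ℂ)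
  have h3 := τ.hasFDerivAt.comp_hasDerivAt 0 h1
  have h4 : deriv (fun t : ℝ =>
      Matrix.trace (NormedSpace.exp (t • X) * C * NormedSpace.exp (t • (-X)) * H)) 0
      = Matrix.trace ((X * C + C * (-X)) * H) := by
    have h5 := h3.deriv
    simpa [Function.comp_def, τ] using h5
  simp only [hee]
  refine h4.trans ?_
  congr 1
  noncomm_ring

/-- The subspace of matrices `Z` with `I • Z ∈ m` that commute with `b j` for `j < r`. -/
noncomputable def kmSubmodule {N : Type*} [Fintype N] [DecidableEq N]
    (m : Submodule ℝ (Matrix N N ℂ)) {nb : ℕ} (b : Fin nb → Matrix N N ℂ) (r : Fin nb) :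
    Submodule ℝ (Matrix N N ℂ) where
  carrier := {Z | Complex.I • Z ∈ m ∧ ∀ i : Fin nb, i < r → Z * b i = b i * Z}
  add_mem' := by
    rintro x y ⟨hx1, hx2⟩ ⟨hy1, hy2⟩
    exact ⟨by rw [smul_add]; exact m.add_mem hx1 hy1,
      fun i hi => by rw [add_mul, mul_add, hx2 i hi, hy2 i hi]⟩
  zero_mem' := ⟨by simp, fun i hi => by simp⟩
  smul_mem' := by
    rintro c x ⟨hx1, hx2⟩
    exact ⟨by rw [smul_comm]; exact m.smul_mem c hx1,
      fun i hi => by rw [smul_mul_assoc, hx2 i hi, mul_smul_comm]⟩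

lemma mem_kmSubmodule {N : Type*} [Fintype N] [DecidableEq N]
    {m : Submodule ℝ (Matrix N N ℂ)} {nb : ℕ} {b : Fin nb → Matrix N N ℂ} {r : Fin nb}
    {Z : Matrix N N ℂ} :
    Z ∈ kmSubmodule m b r ↔
      Complex.I • Z ∈ m ∧ ∀ i : Fin nb, i < r → Z * b i = b i * Z := Iff.rfl


set_option maxHeartbeats 1000000 in
/-- **Reductive KHK Decomposition** (Theorem 2 of the paper).  Let `g = k ⊕ m` be
a Cartan decomposition of a matrix Lie algebra inside `su(2^n)` (elements of `k`
skew-Hermitian), `b : Fin nb → M` an Abelian family of Hermitian matrices with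
`b j ∈ m`, and `H ∈ m` Hermitian commuting with `b j` for `j < r` (i.e.
`H ∈ m_r`).  Let `K` lie in the group generated by exponentials of elements of
`k_r` (elements of `k` commuting with `b j` for `j < r`).  If `K` is a critical
point of `f_r : K ↦ Tr (K (b r) Kᴴ H)` — the derivative along every variation
`t ↦ exp(tX)·K` with `X ∈ k_r` vanishes — then `Kᴴ H K` commutes with `b j`
for all `j ≤ r`, i.e. `Kᴴ H K ∈ m_{r+1}`. -/
theorem reductive_KHK_decomposition
    {N : Type*} [Fintype N] [DecidableEq N]
    (k m : Submodule ℝ (Matrix N N ℂ))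
    (hskew : ∀ X ∈ k, Xᴴ = -X)
    (hkk : ∀ x ∈ k, ∀ y ∈ k, ⁅x, y⁆ ∈ k)
    (hmm : ∀ x ∈ m, ∀ y ∈ m, ⁅x, y⁆ ∈ k)
    (hkm : ∀ x ∈ k, ∀ y ∈ m, ⁅x, y⁆ ∈ m)
    {nb : ℕ} (b : Fin nb → Matrix N N ℂ)
    (hbHerm : ∀ j, (b j)ᴴ = b j)
    (hbm : ∀ j, Complex.I • b j ∈ m)
    (habel : ∀ i j, ⁅b i, b j⁆ = 0)
    (r : Fin nb)
    (H : Matrix N N ℂ) (hHerm : Hᴴ = H) (hHm : Complex.I • H ∈ m)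
    (hHr : ∀ j, j < r → ⁅H, b j⁆ = 0)
    (K : Matrix N N ℂ)
    (hK : K ∈ Submonoid.closure
      {U : Matrix N N ℂ | ∃ X ∈ k, (∀ j, j < r → ⁅X, b j⁆ = 0) ∧
        U = NormedSpace.exp X})
    (hcrit : ∀ X ∈ k, (∀ j, j < r → ⁅X, b j⁆ = 0) →
      deriv (fun t : ℝ =>
        Matrix.trace (NormedSpace.exp ((t : ℂ) • X) * K * b r * Kᴴ *
          (NormedSpace.exp ((t : ℂ) • X))ᴴ * H)) 0 = 0) :
    ∀ j, j ≤ r → ⁅Kᴴ * H * K, b j⁆ = 0 := by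
  set T : Submodule ℝ (Matrix N N ℂ) := kmSubmodule m b r with hT
  -- closure induction: K is unitary and conjugation by K or Kᴴ preserves T
  have hP : K * Kᴴ = 1 ∧ Kᴴ * K = 1 ∧
      (∀ Z ∈ T, K * Z * Kᴴ ∈ T) ∧ (∀ Z ∈ T, Kᴴ * Z * K ∈ T) := by
    refine Submonoid.closure_induction
      (motive := fun U _ => U * Uᴴ = 1 ∧ Uᴴ * U = 1 ∧
        (∀ Z ∈ T, U * Z * Uᴴ ∈ T) ∧ (∀ Z ∈ T, Uᴴ * Z * U ∈ T)) ?_ ?_ ?_ hK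
    · rintro U ⟨X, hXk, hXb, rfl⟩
      have hXs := hskew X hXk
      obtain ⟨hct, h1, h2⟩ := exp_skew_unitary' hXs
      have hadT : ∀ Z ∈ T, X * Z - Z * X ∈ T := by
        intro Z hZ
        obtain ⟨hZ1, hZ2⟩ := mem_kmSubmodule.mp hZ
        refine mem_kmSubmodule.mpr ⟨?_, ?_⟩
        · have h := hkm X hXk _ hZ1
          rw [Ring.lie_def] at h
          have he : X * (Complex.I • Z) - (Complex.I • Z) * X
              = Complex.I • (X * Z - Z * X) := by
            rw [mul_smul_comm, smul_mul_assoc, smul_sub]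
          rwa [he] at h
        · intro i hi
          have hxb : X * b i = b i * X := by
            have h := hXb i hi; rw [Ring.lie_def] at h; exact sub_eq_zero.mp h
          have e1 : X * Z * b i = b i * (X * Z) := by
            rw [mul_assoc, hZ2 i hi, ← mul_assoc, hxb, mul_assoc]
          have e2 : Z * X * b i = b i * (Z * X) := by
            rw [mul_assoc, hxb, ← mul_assoc, hZ2 i hi, mul_assoc]
          rw [sub_mul, mul_sub, e1, e2]
      have hadT' : ∀ Z ∈ T, (-X) * Z - Z * (-X) ∈ T := by
        intro Z hZ
        have heq : (-X) * Z - Z * (-X) = -(X * Z - Z * X) := by noncomm_ring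
        rw [heq]; exact T.neg_mem (hadT Z hZ)
      refine ⟨?_, ?_, ?_, ?_⟩
      · rw [hct]; exact h1
      · rw [hct]; exact h2
      · intro Z hZ; rw [hct]; exact exp_conj_mem_of_adInvariant' T X hadT hZ
      · intro Z hZ; rw [hct]
        have h3 := exp_conj_mem_of_adInvariant' T (-X) hadT' hZ
        rwa [neg_neg] at h3
    · refine ⟨by simp, by simp, fun Z hZ => by simpa using hZ, fun Z hZ => by simpa using hZ⟩
    · rintro U V _ _ ⟨hU1, hU2, hU3, hU4⟩ ⟨hV1, hV2, hV3, hV4⟩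
      have hVU : V * (Vᴴ * Uᴴ) = Uᴴ := by rw [← mul_assoc, hV1, one_mul]
      have hUV : Uᴴ * (U * V) = V := by rw [← mul_assoc, hU2, one_mul]
      refine ⟨?_, ?_, ?_, ?_⟩
      · rw [conjTranspose_mul, mul_assoc, hVU, hU1]
      · rw [conjTranspose_mul, mul_assoc, hUV, hV2]
      · intro Z hZ
        have h := hU3 _ (hV3 Z hZ)
        rw [conjTranspose_mul]
        simp only [mul_assoc] at h ⊢
        exact h
      · intro Z hZ
        have h := hV4 _ (hU4 Z hZ)
        rw [conjTranspose_mul]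
        simp only [mul_assoc] at h ⊢
        exact h
  obtain ⟨hKu1, hKu2, hKc, hKc'⟩ := hP
  have hbrT : b r ∈ T := mem_kmSubmodule.mpr ⟨hbm r, fun i hi => by
    have h := habel r i; rw [Ring.lie_def] at h; exact sub_eq_zero.mp h⟩
  have hHT : H ∈ T := mem_kmSubmodule.mpr ⟨hHm, fun i hi => by
    have h := hHr i hi; rw [Ring.lie_def] at h; exact sub_eq_zero.mp h⟩
  have hCT : K * b r * Kᴴ ∈ T := hKc (b r) hbrT
  obtain ⟨hCm, hCc⟩ := mem_kmSubmodule.mp hCT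
  have hCherm : (K * b r * Kᴴ)ᴴ = K * b r * Kᴴ := by
    simp [conjTranspose_mul, hbHerm r, mul_assoc]
  set C : Matrix N N ℂ := K * b r * Kᴴ with hC
  set X₀ : Matrix N N ℂ := C * H - H * C with hX₀
  have hX₀skew : X₀ᴴ = -X₀ := by
    rw [hX₀, conjTranspose_sub, Matrix.conjTranspose_mul C H, Matrix.conjTranspose_mul H C,
      hHerm, hCherm, neg_sub]
  have hX₀k : X₀ ∈ k := by
    have h := hmm _ hCm _ hHm
    have he : ⁅Complex.I • C, Complex.I • H⁆ = -⁅C, H⁆ := by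
      rw [Ring.lie_def, Ring.lie_def, smul_mul_smul_comm, smul_mul_smul_comm, ← smul_sub,
        Complex.I_mul_I, neg_one_smul]
    rw [he] at h
    have h2 := k.neg_mem h
    rw [neg_neg] at h2
    rw [Ring.lie_def] at h2
    exact h2
  have hX₀comm : ∀ i : Fin nb, i < r → X₀ * b i = b i * X₀ := by
    intro i hi
    have hc := hCc i hi
    have hh := (mem_kmSubmodule.mp hHT).2 i hi
    have e1 : C * H * b i = b i * (C * H) := by
      rw [mul_assoc, hh, ← mul_assoc, hc, mul_assoc]
    have e2 : H * C * b i = b i * (H * C) := by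
      rw [mul_assoc, hc, ← mul_assoc, hh, mul_assoc]
    rw [hX₀, sub_mul, mul_sub, e1, e2]
  have hX₀lie : ∀ i : Fin nb, i < r → ⁅X₀, b i⁆ = 0 := fun i hi => by
    rw [Ring.lie_def, hX₀comm i hi, sub_self]
  have h0 := hcrit X₀ hX₀k hX₀lie
  have hfeq : (fun t : ℝ => Matrix.trace (NormedSpace.exp ((t : ℂ) • X₀) * K * b r * Kᴴ *
        (NormedSpace.exp ((t : ℂ) • X₀))ᴴ * H))
      = fun t : ℝ => Matrix.trace (NormedSpace.exp ((t : ℂ) • X₀) * C *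
        NormedSpace.exp ((t : ℂ) • (-X₀)) * H) := by
    funext t
    have hsm : ((t : ℂ) • X₀)ᴴ = (t : ℂ) • (-X₀) := by
      rw [Matrix.conjTranspose_smul, hX₀skew, Complex.star_def, Complex.conj_ofReal]
    have hct : (NormedSpace.exp ((t : ℂ) • X₀))ᴴ = NormedSpace.exp ((t : ℂ) • (-X₀)) := by
      rw [← hsm, Matrix.exp_conjTranspose]
    rw [hct, hC]
    simp only [mul_assoc]
  rw [hfeq, deriv_trace_conj'] at h0
  -- h0 : trace ((X₀ * C - C * X₀) * H) = 0; convert to trace (X₀ * X₀) = 0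
  have htr : Matrix.trace (X₀ * X₀) = 0 := by
    have t1 : Matrix.trace ((X₀ * C - C * X₀) * H)
        = Matrix.trace (X₀ * (C * H)) - Matrix.trace (X₀ * (H * C)) := by
      rw [sub_mul, trace_sub]
      congr 1
      · rw [mul_assoc]
      · rw [mul_assoc, Matrix.trace_mul_comm C (X₀ * H), mul_assoc]
    have t2 : Matrix.trace (X₀ * (C * H)) - Matrix.trace (X₀ * (H * C))
        = Matrix.trace (X₀ * X₀) := by
      rw [← trace_sub, ← mul_sub, ← hX₀]
    rw [t1, t2] at h0
    exact h0
  have hXX : Matrix.trace (X₀ * X₀ᴴ) = 0 := by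
    rw [hX₀skew, mul_neg, trace_neg, htr, neg_zero]
  have hX₀0 : X₀ = 0 := trace_self_mul_conjTranspose_eq_zero' hXX
  have hCH : C * H = H * C := by
    rw [hX₀] at hX₀0
    exact sub_eq_zero.mp hX₀0
  intro j hj
  rcases lt_or_eq_of_le hj with hjlt | hjeq
  · have hmemT := hKc' H hHT
    rw [Ring.lie_def, (mem_kmSubmodule.mp hmemT).2 j hjlt, sub_self]
  · subst hjeq
    rw [Ring.lie_def, sub_eq_zero]
    have e1 : Kᴴ * (C * H) * K = Kᴴ * (H * C) * K := by rw [hCH]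
    rw [hC] at e1
    simp only [mul_assoc] at e1
    have hred : ∀ W : Matrix N N ℂ, Kᴴ * (K * W) = W := fun W => by
      rw [← mul_assoc, hKu2, one_mul]
    rw [hred] at e1
    rw [hKu2, mul_one] at e1
    simp only [mul_assoc]
    exact e1.symm
end

section
/- Let g = k ⊕ m be a Cartan decomposition of a Pauli dynamical Lie algebra, and let b_1, b_2 ∈ m be commuting Pauli strings in the same connected component of the frustration graph of g. Let k^1_2 be the set of basis Pauli strings of k that anticommute with b_1 and commute with b_2, and k^2_1 those anticommuting with b_2 and commuting with b_1. Then |k^1_2| = |k^2_1|. -/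
open Matrix
open scoped Classical

noncomputable def pauli : Fin 4 → Matrix (Fin 2) (Fin 2) ℂ
  | 0 => 1
  | 1 => !![0, 1; 1, 0]
  | 2 => !![0, -Complex.I; Complex.I, 0]
  | 3 => !![1, 0; 0, -1]

noncomputable def PauliString (n : ℕ) (f : Fin n → Fin 4) :
    Matrix (Fin n → Fin 2) (Fin n → Fin 2) ℂ :=
  fun v w => ∏ i, pauli (f i) (v i) (w i)

def frustGraph {M : Type*} [Ring M] (S : Set M) : SimpleGraph S where
  Adj P Q := P ≠ Q ∧ ⁅(P : M), (Q : M)⁆ ≠ 0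
  symm := ⟨fun P Q h => ⟨h.1.symm, fun hz => h.2 (by rw [Ring.lie_def] at hz ⊢; rw [← neg_sub, hz, neg_zero])⟩⟩
  loopless := ⟨fun P h => h.1 rfl⟩

/-! ### Single-qubit Pauli matrix lemmas -/

lemma pauli_sq : ∀ a, pauli a * pauli a = 1 := by
  intro a
  fin_cases a <;> simp [pauli] <;>
    ext i j <;> fin_cases i <;> fin_cases j <;>
      simp [Matrix.mul_apply, Fin.sum_univ_two, Complex.I_mul_I]

lemma pauli_comm_or_anti : ∀ a b, pauli a * pauli b = pauli b * pauli a ∨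
    pauli a * pauli b = -(pauli b * pauli a) := by
  intro a b
  fin_cases a <;> fin_cases b <;>
    first
    | (left; ext i j; fin_cases i <;> fin_cases j <;>
        simp [pauli, Matrix.mul_apply, Fin.sum_univ_two] <;> done)
    | (right; ext i j; fin_cases i <;> fin_cases j <;>
        simp [pauli, Matrix.mul_apply, Fin.sum_univ_two] <;> done)

lemma pauli_trace_mul : ∀ a b, Matrix.trace (pauli a * pauli b) = if a = b then 2 else 0 := by
  intro a b
  fin_cases a <;> fin_cases b <;>
    simp [pauli, Matrix.trace, Matrix.mul_apply, Fin.sum_univ_two, Matrix.diag,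
      Complex.I_mul_I] <;> ring_nf <;> simp [Complex.I_sq]

/-! ### Pauli string lemmas -/

lemma PS_mul_apply (n : ℕ) (f g : Fin n → Fin 4) (v w : Fin n → Fin 2) :
    (PauliString n f * PauliString n g) v w
      = ∏ i, (pauli (f i) * pauli (g i)) (v i) (w i) := by
  rw [Matrix.mul_apply]
  have h1 : ∀ u : Fin n → Fin 2, PauliString n f v u * PauliString n g u w
      = ∏ i, (pauli (f i) (v i) (u i) * pauli (g i) (u i) (w i)) := by
    intro u
    rw [PauliString, PauliString, Finset.prod_mul_distrib]
  simp_rw [h1, Matrix.mul_apply]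
  rw [← Fintype.piFinset_univ]
  exact (Finset.prod_univ_sum (fun _ => Finset.univ)
    (fun i j => pauli (f i) (v i) j * pauli (g i) j (w i))).symm

lemma PS_sq (n : ℕ) (f : Fin n → Fin 4) : PauliString n f * PauliString n f = 1 := by
  ext v w
  rw [PS_mul_apply]
  simp_rw [pauli_sq]
  rcases eq_or_ne v w with h | h
  · subst h
    simp [Matrix.one_apply]
  · obtain ⟨i, hi⟩ : ∃ i, v i ≠ w i := Function.ne_iff.mp h
    rw [Matrix.one_apply_ne h]
    exact Finset.prod_eq_zero (Finset.mem_univ i) (Matrix.one_apply_ne hi)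

lemma PS_trace (n : ℕ) (f g : Fin n → Fin 4) :
    Matrix.trace (PauliString n f * PauliString n g)
      = ∏ i, Matrix.trace (pauli (f i) * pauli (g i)) := by
  rw [Matrix.trace]
  simp_rw [Matrix.diag, PS_mul_apply]
  rw [← Fintype.piFinset_univ]
  rw [(Finset.prod_univ_sum (fun _ => Finset.univ)
    (fun i j => (pauli (f i) * pauli (g i)) j j)).symm]
  rfl

lemma PS_smul_eq (n : ℕ) (f g : Fin n → Fin 4) (c : ℂ) (hc : c ≠ 0)
    (h : PauliString n f = c • PauliString n g) : PauliString n f = PauliString n g := by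
  have h2 : Matrix.trace (PauliString n g * PauliString n f)
      = c * Matrix.trace (PauliString n g * PauliString n g) := by
    rw [h, Matrix.mul_smul, Matrix.trace_smul]; rfl
  rw [PS_trace, PS_trace] at h2
  simp_rw [pauli_trace_mul] at h2
  simp only [if_pos rfl, Finset.prod_const] at h2
  have h3 : (∏ i, if g i = f i then (2:ℂ) else 0) ≠ 0 := by
    rw [h2]
    exact mul_ne_zero hc (pow_ne_zero _ two_ne_zero)
  have h4 : g = f := by
    funext i
    by_contra hne
    exact h3 (Finset.prod_eq_zero (Finset.mem_univ i) (if_neg hne))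
  rw [h4]

lemma PS_comm_or_anti (n : ℕ) (f g : Fin n → Fin 4) :
    PauliString n f * PauliString n g = PauliString n g * PauliString n f ∨
    PauliString n f * PauliString n g = -(PauliString n g * PauliString n f) := by
  set ε : Fin n → ℂ := fun i =>
    if pauli (f i) * pauli (g i) = pauli (g i) * pauli (f i) then 1 else -1 with hεdef
  have hε : ∀ i, pauli (f i) * pauli (g i) = ε i • (pauli (g i) * pauli (f i)) := by
    intro i
    by_cases h : pauli (f i) * pauli (g i) = pauli (g i) * pauli (f i)
    · simp [hεdef, h]
    · have := (pauli_comm_or_anti (f i) (g i)).resolve_left h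
      simp [hεdef, if_neg h, this]
  have key : PauliString n f * PauliString n g
      = (∏ i, ε i) • (PauliString n g * PauliString n f) := by
    ext v w
    rw [PS_mul_apply, Matrix.smul_apply, PS_mul_apply]
    simp_rw [hε]
    simp only [Matrix.smul_apply, smul_eq_mul]
    rw [Finset.prod_mul_distrib]
  have hsq : (∏ i, ε i) * (∏ i, ε i) = 1 := by
    rw [← Finset.prod_mul_distrib]
    apply Finset.prod_eq_one
    intro i _
    by_cases h : pauli (f i) * pauli (g i) = pauli (g i) * pauli (f i) <;>
      simp [hεdef, h]
  rcases mul_self_eq_one_iff.mp hsq with h1 | h1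
  · left; rw [key, h1, one_smul]
  · right; rw [key, h1, neg_smul, one_smul]

/-! ### Sign-composition helpers in a general ring -/

section RingHelpers
variable {A : Type*} [Ring A] {x y a : A}

lemma anti_anti_mul (hx : x * a = -(a * x)) (hy : y * a = -(a * y)) :
    (x * y) * a = a * (x * y) := by
  rw [mul_assoc, hy, mul_neg, ← mul_assoc, hx, neg_mul, neg_neg, mul_assoc]

lemma anti_comm_mul (hx : x * a = -(a * x)) (hy : y * a = a * y) :
    (x * y) * a = -(a * (x * y)) := by
  rw [mul_assoc, hy, ← mul_assoc, hx, neg_mul, mul_assoc]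

lemma comm_anti_mul (hx : x * a = a * x) (hy : y * a = -(a * y)) :
    (x * y) * a = -(a * (x * y)) := by
  rw [mul_assoc, hy, mul_neg, ← mul_assoc, hx, mul_assoc]

lemma comm_comm_mul (hx : x * a = a * x) (hy : y * a = a * y) :
    (x * y) * a = a * (x * y) := by
  rw [mul_assoc, hy, ← mul_assoc, hx, mul_assoc]

lemma flip_anti (h : x * a = -(a * x)) : a * x = -(x * a) := by rw [h, neg_neg]

end RingHelpers

/-! ### Matrix-level helpers -/

section MatHelpers
variable {n : ℕ}
local notation "MX" => Matrix (Fin n → Fin 2) (Fin n → Fin 2) ℂ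

lemma smul_anti {X R A : MX} {c : ℂ} (h : X = c • R) (hc : c ≠ 0)
    (ha : X * A = -(A * X)) : R * A = -(A * R) := by
  have hR : R = c⁻¹ • X := by rw [h, smul_smul, inv_mul_cancel₀ hc, one_smul]
  rw [hR, smul_mul_assoc, mul_smul_comm, ha, smul_neg]

lemma smul_comm_mat {X R A : MX} {c : ℂ} (h : X = c • R) (hc : c ≠ 0)
    (ha : X * A = A * X) : R * A = A * R := by
  have hR : R = c⁻¹ • X := by rw [h, smul_smul, inv_mul_cancel₀ hc, one_smul]
  rw [hR, smul_mul_assoc, mul_smul_comm, ha]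

lemma prod_ne_zero' {P Q : MX} (hP : P * P = 1) (hQ : Q * Q = 1) : P * Q ≠ 0 := by
  intro h
  have h1 : (P * Q) * (Q * P) = 1 := by
    rw [mul_assoc, ← mul_assoc Q, hQ, one_mul, hP]
  rw [h, zero_mul] at h1
  exact zero_ne_one h1

lemma not_comm_and_anti {P Q : MX} (h1 : P * Q = Q * P) (h2 : P * Q = -(Q * P))
    (hnz : Q * P ≠ 0) : False := by
  apply hnz
  have h3 : (2 : ℂ) • (Q * P) = 0 := by
    rw [two_smul]
    rw [h1] at h2
    rw [eq_neg_iff_add_eq_zero] at h2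
    exact h2
  rcases smul_eq_zero.mp h3 with h | h
  · norm_num at h
  · exact h

lemma PS_mul_ne_zero (f g : Fin n → Fin 4) : PauliString n f * PauliString n g ≠ 0 :=
  prod_ne_zero' (PS_sq n f) (PS_sq n g)

lemma lie_ne_iff (f g : Fin n → Fin 4) :
    ⁅PauliString n f, PauliString n g⁆ ≠ 0 ↔
      PauliString n f * PauliString n g = -(PauliString n g * PauliString n f) := by
  rw [Ring.lie_def]
  constructor
  · intro h
    rcases PS_comm_or_anti n f g with hc | hc
    · exact absurd (by rw [hc, sub_self]) h
    · exact hc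
  · intro h hz
    rw [sub_eq_zero] at hz
    exact not_comm_and_anti hz h (PS_mul_ne_zero g f)

lemma lie_eq_iff {X Y : MX} : ⁅X, Y⁆ = 0 ↔ X * Y = Y * X := by
  rw [Ring.lie_def, sub_eq_zero]

lemma lie_ne_symm {X Y : MX} (h : ⁅X, Y⁆ ≠ 0) : ⁅Y, X⁆ ≠ 0 := by
  intro hz
  exact h (by rw [Ring.lie_def] at hz ⊢; rw [← neg_sub, hz, neg_zero])

/-! ### Corollary A4 : existence of a common anticommuting element -/

lemma A4core (T : Finset MX)
    (hanti : ∀ P ∈ T, ∀ Q ∈ T, (⁅P, Q⁆ ≠ 0 ↔ P * Q = -(Q * P)))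
    (hsq : ∀ P ∈ T, P * P = 1)
    (hclos : ∀ P ∈ T, ∀ Q ∈ T, ⁅P, Q⁆ ≠ 0 → ∃ R ∈ T, ∃ c : ℂ, c ≠ 0 ∧ P * Q = c • R) :
    ∀ m : ℕ, ∀ x y : ((T : Set MX)),
      ∀ w : (frustGraph (T : Set MX)).Walk x y, w.length ≤ m →
      ⁅(x : MX), (y : MX)⁆ = 0 → x ≠ y →
      ∃ d ∈ T, ⁅d, (x : MX)⁆ ≠ 0 ∧ ⁅d, (y : MX)⁆ ≠ 0 := by
  intro m
  induction m with
  | zero =>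
    intro x y w hlen hcm hne
    exact absurd (w.eq_of_length_eq_zero (Nat.le_zero.mp hlen)) hne
  | succ m ih =>
    intro x y w hlen hcm hne
    cases w with
    | nil => exact absurd rfl hne
    | @cons _ a₁ _ hadj w₁ =>
      have hxT : (x : MX) ∈ T := Finset.mem_coe.mp x.2
      have hyT : (y : MX) ∈ T := Finset.mem_coe.mp y.2
      have ha₁T : (a₁ : MX) ∈ T := Finset.mem_coe.mp a₁.2
      have hxa₁ : ⁅(x : MX), (a₁ : MX)⁆ ≠ 0 := hadj.2
      by_cases h1 : ⁅(a₁ : MX), (y : MX)⁆ ≠ 0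
      · exact ⟨a₁, ha₁T, lie_ne_symm hxa₁, h1⟩
      · push_neg at h1
        cases w₁ with
        | nil => exact absurd hcm (by simpa using hxa₁)
        | @cons _ a₂ _ hadj₂ w₂ =>
          have ha₂T : (a₂ : MX) ∈ T := Finset.mem_coe.mp a₂.2
          have hlen₂ : w₂.length + 1 ≤ m := by
            simp only [SimpleGraph.Walk.length_cons] at hlen
            omega
          by_cases h2 : ⁅(a₂ : MX), (x : MX)⁆ ≠ 0
          · -- shortcut
            have hnexa₂ : x ≠ a₂ := by
              intro h
              rw [h] at h2
              exact h2 (by rw [Ring.lie_def, sub_self])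
            have adjxa₂ : (frustGraph (T : Set MX)).Adj x a₂ := ⟨hnexa₂, lie_ne_symm h2⟩
            exact ih x y (SimpleGraph.Walk.cons adjxa₂ w₂)
              (by simpa using hlen₂) hcm hne
          · push_neg at h2
            -- matrix facts
            have haX : (x : MX) * a₁ = -((a₁ : MX) * x) := (hanti _ hxT _ ha₁T).mp hxa₁
            have haXr : (a₁ : MX) * x = -((x : MX) * a₁) := flip_anti haX
            have hA₁A₂ : (a₁ : MX) * a₂ = -((a₂ : MX) * a₁) :=
              (hanti _ ha₁T _ ha₂T).mp hadj₂.2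
            have hA₂X : (a₂ : MX) * x = (x : MX) * a₂ := lie_eq_iff.mp h2
            have hA₁Y : (a₁ : MX) * y = (y : MX) * a₁ := lie_eq_iff.mp h1
            have hXY : (x : MX) * y = (y : MX) * x := lie_eq_iff.mp hcm
            -- x' := R with a₁ * x = c • R
            obtain ⟨R, hRT, c, hc, hEq⟩ := hclos _ ha₁T _ hxT (lie_ne_symm hxa₁)
            have hRA₂ : R * a₂ = -((a₂ : MX) * R) :=
              smul_anti hEq hc (anti_comm_mul hA₁A₂ hA₂X.symm)
            have hRY : R * y = (y : MX) * R :=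
              smul_comm_mat hEq hc (comm_comm_mul hA₁Y hXY)
            have hRA₁ : R * a₁ = -((a₁ : MX) * R) :=
              smul_anti hEq hc (comm_anti_mul rfl haX)
            have hRne₂ : R ≠ (a₂ : MX) := by
              intro h
              rw [h] at hRA₂
              exact not_comm_and_anti rfl hRA₂ (by rw [hsq _ ha₂T]; exact one_ne_zero)
            have hRneY : R ≠ (y : MX) := by
              intro h
              rw [h] at hRA₁
              exact not_comm_and_anti hA₁Y.symm hRA₁
                (prod_ne_zero' (hsq _ ha₁T) (hsq _ hyT))
            set x' : ((T : Set MX)) := ⟨R, Finset.mem_coe.mpr hRT⟩ with hx'def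
            have adjx'a₂ : (frustGraph (T : Set MX)).Adj x' a₂ :=
              ⟨by simpa [hx'def] using fun h => hRne₂ (congrArg Subtype.val h),
               (hanti _ hRT _ ha₂T).mpr hRA₂⟩
            obtain ⟨d, hdT, hdR, hdY⟩ := ih x' y (SimpleGraph.Walk.cons adjx'a₂ w₂)
              (by simpa using hlen₂) (lie_eq_iff.mpr hRY)
              (fun h => hRneY (congrArg Subtype.val h))
            have hdRm : (d : MX) * R = -(R * d) := (hanti _ hdT _ hRT).mp hdR
            have hdYm : (d : MX) * y = -((y : MX) * d) := (hanti _ hdT _ hyT).mp hdY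
            by_cases hdx : ⁅d, (x : MX)⁆ ≠ 0
            · exact ⟨d, hdT, hdx, hdY⟩
            · push_neg at hdx
              have hdxc : d * (x : MX) = (x : MX) * d := lie_eq_iff.mp hdx
              -- derive d anti a₁
              have hdA₁X : (d : MX) * ((a₁ : MX) * x) = -(((a₁ : MX) * x) * d) := by
                rw [hEq, mul_smul_comm, smul_mul_assoc, hdRm, smul_neg]
              have hDA₁ : (d : MX) * a₁ = -((a₁ : MX) * d) := by
                have h3 : (((a₁ : MX) * x) * x) * d = -((d : MX) * (((a₁ : MX) * x) * x)) :=
                  anti_comm_mul (flip_anti hdA₁X) hdxc.symm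
                have hxx : ((a₁ : MX) * x) * x = (a₁ : MX) := by
                  rw [mul_assoc, hsq _ hxT, mul_one]
                rw [hxx] at h3
                exact flip_anti h3
              have hda₁lie : ⁅(d : MX), (a₁ : MX)⁆ ≠ 0 := (hanti _ hdT _ ha₁T).mpr hDA₁
              obtain ⟨R', hR'T, c', hc', hEq'⟩ := hclos _ hdT _ ha₁T hda₁lie
              have hR'X : R' * x = -((x : MX) * R') :=
                smul_anti hEq' hc' (comm_anti_mul hdxc haXr)
              have hR'Y : R' * y = -((y : MX) * R') :=
                smul_anti hEq' hc' (anti_comm_mul hdYm hA₁Y)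
              exact ⟨R', hR'T, (hanti _ hR'T _ hxT).mpr hR'X,
                (hanti _ hR'T _ hyT).mpr hR'Y⟩

end MatHelpers

section Main
variable {n : ℕ}
local notation "MX" => Matrix (Fin n → Fin 2) (Fin n → Fin 2) ℂ

lemma scalar_link {X Y R : MX} {c c' : ℂ} (hc' : c' ≠ 0)
    (h1 : X = c • R) (h2 : Y = c' • R) : X = (c * c'⁻¹) • Y := by
  rw [h2, smul_smul, mul_assoc, inv_mul_cancel₀ hc', mul_one, h1]

lemma pauli_prop_eq {p q : MX} {f g : Fin n → Fin 4}
    (hp : p = PauliString n f) (hq : q = PauliString n g)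
    {c : ℂ} (hc : c ≠ 0) (h : p = c • q) : p = q := by
  subst hp; subst hq
  exact PS_smul_eq n f g c hc h

lemma card_le_aux (Kb Mb : Finset MX)
    (hPauli : ∀ P ∈ Kb ∪ Mb, ∃ f : Fin n → Fin 4, P = PauliString n f)
    (hKK : ∀ P ∈ Kb, ∀ Q ∈ Kb, ⁅P, Q⁆ ≠ 0 → ∃ R ∈ Kb, ∃ c : ℂ, c ≠ 0 ∧ P * Q = c • R)
    (hMM : ∀ P ∈ Mb, ∀ Q ∈ Mb, ⁅P, Q⁆ ≠ 0 → ∃ R ∈ Kb, ∃ c : ℂ, c ≠ 0 ∧ P * Q = c • R)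
    (hKM : ∀ P ∈ Kb, ∀ Q ∈ Mb, ⁅P, Q⁆ ≠ 0 → ∃ R ∈ Mb, ∃ c : ℂ, c ≠ 0 ∧ P * Q = c • R)
    (b₁ b₂ : MX) (hb₁ : b₁ ∈ Mb) (hb₂ : b₂ ∈ Mb)
    (hcm : b₁ * b₂ = b₂ * b₁)
    (d : MX) (hdK : d ∈ Kb)
    (hd1 : d * b₁ = -(b₁ * d)) (hd2 : d * b₂ = -(b₂ * d)) :
    (Kb.filter (fun p => ⁅p, b₁⁆ ≠ 0 ∧ ⁅p, b₂⁆ = 0)).card ≤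
      (Kb.filter (fun p => ⁅p, b₂⁆ ≠ 0 ∧ ⁅p, b₁⁆ = 0)).card := by
  have hb₁u : b₁ ∈ Kb ∪ Mb := Finset.mem_union_right _ hb₁
  have hb₂u : b₂ ∈ Kb ∪ Mb := Finset.mem_union_right _ hb₂
  have hdu : d ∈ Kb ∪ Mb := Finset.mem_union_left _ hdK
  have hanti : ∀ P ∈ Kb ∪ Mb, ∀ Q ∈ Kb ∪ Mb, (⁅P, Q⁆ ≠ 0 ↔ P * Q = -(Q * P)) := by
    intro P hP Q hQ
    obtain ⟨f, rfl⟩ := hPauli P hP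
    obtain ⟨g, rfl⟩ := hPauli Q hQ
    exact lie_ne_iff f g
  have hsqU : ∀ P ∈ Kb ∪ Mb, P * P = 1 := by
    intro P hP
    obtain ⟨f, rfl⟩ := hPauli P hP
    exact PS_sq n f
  have hdi : ∀ P ∈ Kb ∪ Mb, ∀ Q ∈ Kb ∪ Mb,
      P * Q = Q * P ∨ P * Q = -(Q * P) := by
    intro P hP Q hQ
    obtain ⟨f, rfl⟩ := hPauli P hP
    obtain ⟨g, rfl⟩ := hPauli Q hQ
    exact PS_comm_or_anti n f g
  have hd1' : b₁ * d = -(d * b₁) := flip_anti hd1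
  have hd2' : b₂ * d = -(d * b₂) := flip_anti hd2
  have key : ∀ p ∈ Kb, p * b₁ = -(b₁ * p) → p * b₂ = b₂ * p →
      ∃ R, R ∈ Kb ∧ (R * b₂ = -(b₂ * R)) ∧ (R * b₁ = b₁ * R) ∧
        (((R * d = -(d * R)) ∧ ∃ c : ℂ, c ≠ 0 ∧ p * d = c • R) ∨
         ((R * d = d * R) ∧ ∃ c : ℂ, c ≠ 0 ∧ b₂ * (d * (p * b₁)) = c • R)) := by
    intro p hpK hp1 hp2
    have hpu : p ∈ Kb ∪ Mb := Finset.mem_union_left _ hpK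
    rcases hdi p hpu d hdu with hpd | hpd
    · -- p commutes with d
      have hpb₁lie : ⁅p, b₁⁆ ≠ 0 := (hanti p hpu b₁ hb₁u).mpr hp1
      obtain ⟨R₁, hR₁M, c₁, hc₁, e₁⟩ := hKM p hpK b₁ hb₁ hpb₁lie
      have hR₁d : R₁ * d = -(d * R₁) := smul_anti e₁ hc₁ (comm_anti_mul hpd hd1')
      have hR₁b₂ : R₁ * b₂ = b₂ * R₁ := smul_comm_mat e₁ hc₁ (comm_comm_mul hp2 hcm)
      have hR₁b₁ : R₁ * b₁ = -(b₁ * R₁) := smul_anti e₁ hc₁ (anti_comm_mul hp1 rfl)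
      have hR₁u : R₁ ∈ Kb ∪ Mb := Finset.mem_union_right _ hR₁M
      have hdR₁lie : ⁅d, R₁⁆ ≠ 0 := (hanti d hdu R₁ hR₁u).mpr (flip_anti hR₁d)
      obtain ⟨R₂, hR₂M, c₂, hc₂, e₂⟩ := hKM d hdK R₁ hR₁M hdR₁lie
      have hR₂b₂ : R₂ * b₂ = -(b₂ * R₂) := smul_anti e₂ hc₂ (anti_comm_mul hd2 hR₁b₂)
      have hR₂b₁ : R₂ * b₁ = b₁ * R₂ := smul_comm_mat e₂ hc₂ (anti_anti_mul hd1 hR₁b₁)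
      have hR₂d : R₂ * d = -(d * R₂) := smul_anti e₂ hc₂ (comm_anti_mul rfl hR₁d)
      have hR₂u : R₂ ∈ Kb ∪ Mb := Finset.mem_union_right _ hR₂M
      have hb₂R₂lie : ⁅b₂, R₂⁆ ≠ 0 := (hanti b₂ hb₂u R₂ hR₂u).mpr (flip_anti hR₂b₂)
      obtain ⟨R₃, hR₃K, c₃, hc₃, e₃⟩ := hMM b₂ hb₂ R₂ hR₂M hb₂R₂lie
      have hR₃b₂ : R₃ * b₂ = -(b₂ * R₃) := smul_anti e₃ hc₃ (comm_anti_mul rfl hR₂b₂)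
      have hR₃b₁ : R₃ * b₁ = b₁ * R₃ := smul_comm_mat e₃ hc₃ (comm_comm_mul hcm.symm hR₂b₁)
      have hR₃d : R₃ * d = d * R₃ := smul_comm_mat e₃ hc₃ (anti_anti_mul hd2' hR₂d)
      refine ⟨R₃, hR₃K, hR₃b₂, hR₃b₁, Or.inr ⟨hR₃d, c₁ * (c₂ * c₃),
        mul_ne_zero hc₁ (mul_ne_zero hc₂ hc₃), ?_⟩⟩
      rw [e₁, mul_smul_comm, e₂, mul_smul_comm, mul_smul_comm, e₃, smul_smul, smul_smul,
        mul_assoc]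
    · -- p anticommutes with d
      have hpdlie : ⁅p, d⁆ ≠ 0 := (hanti p hpu d hdu).mpr hpd
      obtain ⟨R, hRK, c, hc, e⟩ := hKK p hpK d hdK hpdlie
      have hRb₂ : R * b₂ = -(b₂ * R) := smul_anti e hc (comm_anti_mul hp2 hd2)
      have hRb₁ : R * b₁ = b₁ * R := smul_comm_mat e hc (anti_anti_mul hp1 hd1)
      have hRd : R * d = -(d * R) := smul_anti e hc (anti_comm_mul hpd rfl)
      exact ⟨R, hRK, hRb₂, hRb₁, Or.inl ⟨hRd, c, hc, e⟩⟩
  choose! F hF using key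
  apply Finset.card_le_card_of_injOn F
  · intro p hp
    rw [Finset.mem_coe, Finset.mem_filter] at hp
    obtain ⟨hpK, hp1, hp2⟩ := hp
    have hpu : p ∈ Kb ∪ Mb := Finset.mem_union_left _ hpK
    have hp1m : p * b₁ = -(b₁ * p) := (hanti p hpu b₁ hb₁u).mp hp1
    have hp2m : p * b₂ = b₂ * p := lie_eq_iff.mp hp2
    obtain ⟨hFK, hF2, hF1, _⟩ := hF p hpK hp1m hp2m
    have hFu : F p ∈ Kb ∪ Mb := Finset.mem_union_left _ hFK
    exact Finset.mem_coe.mpr (Finset.mem_filter.mpr ⟨hFK, (hanti _ hFu b₂ hb₂u).mpr hF2, lie_eq_iff.mpr hF1⟩)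
  · intro p hp q hq heq
    rw [Finset.coe_filter] at hp hq
    obtain ⟨hpK, hp1, hp2⟩ := hp
    obtain ⟨hqK, hq1, hq2⟩ := hq
    have hpu : p ∈ Kb ∪ Mb := Finset.mem_union_left _ hpK
    have hqu : q ∈ Kb ∪ Mb := Finset.mem_union_left _ hqK
    have hp1m : p * b₁ = -(b₁ * p) := (hanti p hpu b₁ hb₁u).mp hp1
    have hp2m : p * b₂ = b₂ * p := lie_eq_iff.mp hp2
    have hq1m : q * b₁ = -(b₁ * q) := (hanti q hqu b₁ hb₁u).mp hq1
    have hq2m : q * b₂ = b₂ * q := lie_eq_iff.mp hq2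
    obtain ⟨hFpK, _, _, hcasep⟩ := hF p hpK hp1m hp2m
    obtain ⟨hFqK, _, _, hcaseq⟩ := hF q hqK hq1m hq2m
    rw [heq] at hcasep
    set R := F q with hRdef
    have hRu : R ∈ Kb ∪ Mb := Finset.mem_union_left _ (heq ▸ hFpK)
    have hdRnZ : d * R ≠ 0 := prod_ne_zero' (hsqU d hdu) (hsqU R hRu)
    obtain ⟨f, hfp⟩ := hPauli p hpu
    obtain ⟨g, hgq⟩ := hPauli q hqu
    rcases hcasep with ⟨hRda, c, hc, ep⟩ | ⟨hRdc, c, hc, ep⟩ <;>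
      rcases hcaseq with ⟨hRda', c', hc', eq'⟩ | ⟨hRdc', c', hc', eq'⟩
    · -- both anticommuting with d
      have hp' : p = c • (R * d) := by
        rw [← smul_mul_assoc, ← ep, mul_assoc, hsqU d hdu, mul_one]
      have hq' : q = c' • (R * d) := by
        rw [← smul_mul_assoc, ← eq', mul_assoc, hsqU d hdu, mul_one]
      exact pauli_prop_eq hfp hgq (mul_ne_zero hc (inv_ne_zero hc'))
        (scalar_link hc' hp' hq')
    · exact (not_comm_and_anti hRdc' hRda hdRnZ).elim
    · exact (not_comm_and_anti hRdc hRda' hdRnZ).elim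
    · -- both commuting with d
      have recover : ∀ r : MX, r * b₁ = -(b₁ * r) → ∀ cc : ℂ,
          b₂ * (d * (r * b₁)) = cc • R → r = cc • ((d * (b₂ * R)) * b₁) := by
        intro r _ cc hr
        have h1 : d * (r * b₁) = cc • (b₂ * R) := by
          rw [← one_mul (d * (r * b₁)), ← hsqU b₂ hb₂u, mul_assoc, hr, mul_smul_comm]
        have h2 : r * b₁ = cc • (d * (b₂ * R)) := by
          rw [← one_mul (r * b₁), ← hsqU d hdu, mul_assoc, h1, mul_smul_comm]
        rw [← mul_one r, ← hsqU b₁ hb₁u, ← mul_assoc, h2, smul_mul_assoc]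
      have hp' := recover p hp1m c ep
      have hq' := recover q hq1m c' eq'
      exact pauli_prop_eq hfp hgq (mul_ne_zero hc (inv_ne_zero hc'))
        (scalar_link hc' hp' hq')

end Main

/-- **Lemma A5.**  For a Cartan decomposition `g = k ⊕ m` of a Pauli dynamical
Lie algebra, with Pauli bases `Kb` of `k` and `Mb` of `m`, and commuting
`b₁, b₂ ∈ Mb` in the same connected component of the frustration graph of
`Kb ∪ Mb`, the number of basis Pauli strings of `k` anticommuting with `b₁`
and commuting with `b₂` equals the number anticommuting with `b₂` and
commuting with `b₁`:  `|k¹₂| = |k²₁|`. -/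
theorem card_k_one_two_eq_card_k_two_one
    (n : ℕ) (Kb Mb : Finset (Matrix (Fin n → Fin 2) (Fin n → Fin 2) ℂ))
    (hPauli : ∀ P ∈ Kb ∪ Mb, ∃ f : Fin n → Fin 4, P = PauliString n f)
    (hKK : ∀ P ∈ Kb, ∀ Q ∈ Kb, ⁅P, Q⁆ ≠ 0 → ∃ R ∈ Kb, ∃ c : ℂ, c ≠ 0 ∧ P * Q = c • R)
    (hMM : ∀ P ∈ Mb, ∀ Q ∈ Mb, ⁅P, Q⁆ ≠ 0 → ∃ R ∈ Kb, ∃ c : ℂ, c ≠ 0 ∧ P * Q = c • R)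
    (hKM : ∀ P ∈ Kb, ∀ Q ∈ Mb, ⁅P, Q⁆ ≠ 0 → ∃ R ∈ Mb, ∃ c : ℂ, c ≠ 0 ∧ P * Q = c • R)
    (b₁ b₂ : Matrix (Fin n → Fin 2) (Fin n → Fin 2) ℂ)
    (hb₁ : b₁ ∈ Mb) (hb₂ : b₂ ∈ Mb) (hcomm : ⁅b₁, b₂⁆ = 0)
    (hconn : (frustGraph ((Kb ∪ Mb : Finset _) : Set _)).Reachable
      ⟨b₁, by exact_mod_cast Finset.mem_union_right Kb hb₁⟩
      ⟨b₂, by exact_mod_cast Finset.mem_union_right Kb hb₂⟩) :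
    (Kb.filter (fun p => ⁅p, b₁⁆ ≠ 0 ∧ ⁅p, b₂⁆ = 0)).card =
      (Kb.filter (fun p => ⁅p, b₂⁆ ≠ 0 ∧ ⁅p, b₁⁆ = 0)).card := by
  by_cases hbb : b₁ = b₂
  · subst hbb
    rfl
  · have hb₁u : b₁ ∈ Kb ∪ Mb := Finset.mem_union_right _ hb₁
    have hb₂u : b₂ ∈ Kb ∪ Mb := Finset.mem_union_right _ hb₂
    have hanti : ∀ P ∈ Kb ∪ Mb, ∀ Q ∈ Kb ∪ Mb, (⁅P, Q⁆ ≠ 0 ↔ P * Q = -(Q * P)) := by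
      intro P hP Q hQ
      obtain ⟨f, rfl⟩ := hPauli P hP
      obtain ⟨g, rfl⟩ := hPauli Q hQ
      exact lie_ne_iff f g
    have hsqU : ∀ P ∈ Kb ∪ Mb, P * P = 1 := by
      intro P hP
      obtain ⟨f, rfl⟩ := hPauli P hP
      exact PS_sq n f
    have hclosU : ∀ P ∈ Kb ∪ Mb, ∀ Q ∈ Kb ∪ Mb, ⁅P, Q⁆ ≠ 0 →
        ∃ R ∈ Kb ∪ Mb, ∃ c : ℂ, c ≠ 0 ∧ P * Q = c • R := by
      intro P hP Q hQ hlie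
      rcases Finset.mem_union.mp hP with hPK | hPM <;>
        rcases Finset.mem_union.mp hQ with hQK | hQM
      · obtain ⟨R, hR, c, hc, e⟩ := hKK P hPK Q hQK hlie
        exact ⟨R, Finset.mem_union_left _ hR, c, hc, e⟩
      · obtain ⟨R, hR, c, hc, e⟩ := hKM P hPK Q hQM hlie
        exact ⟨R, Finset.mem_union_right _ hR, c, hc, e⟩
      · obtain ⟨R, hR, c, hc, e⟩ := hKM Q hQK P hPM (lie_ne_symm hlie)
        refine ⟨R, Finset.mem_union_right _ hR, -c, neg_ne_zero.mpr hc, ?_⟩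
        rw [(hanti P hP Q hQ).mp hlie, e, neg_smul]
      · obtain ⟨R, hR, c, hc, e⟩ := hMM P hPM Q hQM hlie
        exact ⟨R, Finset.mem_union_left _ hR, c, hc, e⟩
    obtain ⟨w⟩ := hconn
    obtain ⟨d₀, hd₀u, hd₀1lie, hd₀2lie⟩ :=
      A4core (Kb ∪ Mb) hanti hsqU hclosU w.length _ _ w le_rfl hcomm
        (fun h => hbb (congrArg Subtype.val h))
    have hd₀1 : d₀ * b₁ = -(b₁ * d₀) :=
      flip_anti ((hanti b₁ hb₁u d₀ hd₀u).mp (lie_ne_symm hd₀1lie))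
    have hd₀2 : d₀ * b₂ = -(b₂ * d₀) :=
      flip_anti ((hanti b₂ hb₂u d₀ hd₀u).mp (lie_ne_symm hd₀2lie))
    have hcm : b₁ * b₂ = b₂ * b₁ := lie_eq_iff.mp hcomm
    obtain ⟨d, hdK, hd1, hd2⟩ : ∃ d ∈ Kb, d * b₁ = -(b₁ * d) ∧ d * b₂ = -(b₂ * d) := by
      rcases Finset.mem_union.mp hd₀u with hK | hM
      · exact ⟨d₀, hK, hd₀1, hd₀2⟩
      · obtain ⟨D, hDK, c, hc, e⟩ := hMM d₀ hM b₁ hb₁ hd₀1lie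
        exact ⟨D, hDK, smul_anti e hc (anti_comm_mul hd₀1 rfl),
          smul_anti e hc (anti_comm_mul hd₀2 hcm)⟩
    exact le_antisymm
      (card_le_aux Kb Mb hPauli hKK hMM hKM b₁ b₂ hb₁ hb₂ hcm d hdK hd1 hd2)
      (card_le_aux Kb Mb hPauli hKK hMM hKM b₂ b₁ hb₂ hb₁ hcm.symm d hdK hd2 hd1)
end

section
/- Let A be an n×n Hermitian matrix and v a diagonal matrix with distinct diagonal entries. If the function U ↦ Tr(U v U† A) on the unitary group has a critical point at U = K, then K† A K commutes with v, and hence K† A K is diagonal. -/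
open Matrix

attribute [local instance] Matrix.linftyOpNormedRing Matrix.linftyOpNormedAlgebra

namespace KHKaux

variable {n : ℕ}

/-- trace as a continuous ℝ-linear map -/
noncomputable def traceCLM (n : ℕ) : Matrix (Fin n) (Fin n) ℂ →L[ℝ] ℂ :=
  LinearMap.toContinuousLinearMap
    ((Matrix.traceLinearMap (Fin n) ℂ ℂ).restrictScalars ℝ)

lemma traceCLM_apply (M : Matrix (Fin n) (Fin n) ℂ) : traceCLM n M = M.trace := rfl

lemma hasDerivAt_exp_aux (X : Matrix (Fin n) (Fin n) ℂ) :
    HasDerivAt (fun t : ℝ => NormedSpace.exp ((t : ℂ) • X)) X 0 := by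
  have h := hasDerivAt_exp_smul_const (𝕂 := ℂ) X ((0:ℝ) : ℂ)
  have h2 := HasDerivAt.scomp (x := (0:ℝ)) h (Complex.ofRealCLM.hasDerivAt)
  simp at h2
  exact h2

lemma trace_stdBasisMatrix_mul (C : Matrix (Fin n) (Fin n) ℂ) (i j : Fin n) :
    (Matrix.single j i 1 * C).trace = C i j := by
  simp [Matrix.trace, Matrix.diag, Matrix.mul_apply, Matrix.single, ite_and,
    Finset.sum_ite_eq]

/-- if trace (X * C) = 0 for all skew-Hermitian X then C = 0 -/
lemma eq_zero_of_skew_traces (C : Matrix (Fin n) (Fin n) ℂ)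
    (h : ∀ X : Matrix (Fin n) (Fin n) ℂ, Xᴴ = -X → (X * C).trace = 0) : C = 0 := by
  have hY : ∀ Y : Matrix (Fin n) (Fin n) ℂ, (Y * C).trace = 0 := by
    intro Y
    have h1 := h ((1/2 : ℂ) • (Y - Yᴴ)) (by
      rw [conjTranspose_smul, conjTranspose_sub, conjTranspose_conjTranspose]
      rw [show star (1/2 : ℂ) = 1/2 by norm_num]
      rw [← smul_neg, neg_sub])
    have h2 := h ((-(Complex.I)/2 : ℂ) • (Y + Yᴴ)) (by
      rw [conjTranspose_smul, conjTranspose_add, conjTranspose_conjTranspose]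
      rw [show star (-(Complex.I)/2 : ℂ) = -(-(Complex.I)/2) by
        rw [star_div₀, star_neg, Complex.star_def, Complex.conj_I, map_ofNat]; ring]
      rw [neg_smul, add_comm])
    rw [Matrix.smul_mul, Matrix.trace_smul, smul_eq_zero] at h1 h2
    have h1' : ((Y - Yᴴ) * C).trace = 0 := by
      rcases h1 with h1 | h1
      · norm_num at h1
      · exact h1
    have h2' : ((Y + Yᴴ) * C).trace = 0 := by
      rcases h2 with h2 | h2
      · exfalso
        rw [div_eq_zero_iff, neg_eq_zero] at h2
        rcases h2 with h2 | h2
        · exact Complex.I_ne_zero h2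
        · norm_num at h2
      · exact h2
    have hsum : ((Y - Yᴴ) * C).trace + ((Y + Yᴴ) * C).trace = (2 : ℂ) * (Y * C).trace := by
      rw [← Matrix.trace_add, ← Matrix.add_mul]
      have : Y - Yᴴ + (Y + Yᴴ) = (2 : ℂ) • Y := by module
      rw [this, Matrix.smul_mul, Matrix.trace_smul, smul_eq_mul]
    rw [h1', h2', zero_add] at hsum
    have := hsum.symm
    rw [mul_eq_zero] at this
    rcases this with h | h
    · norm_num at h
    · exact h
  ext i j
  have := hY (Matrix.single j i 1)
  rw [trace_stdBasisMatrix_mul] at this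
  simpa using this

end KHKaux

/-- **KHK optimization principle** for the full unitary group.  If `A` is
Hermitian, `v = diagonal d` has distinct diagonal entries, `K` is unitary, and
`K` is a critical point of `U ↦ Tr (U v Uᴴ A)` (the derivative along every
one-parameter variation `t ↦ exp(tX)·K` with `X` skew-Hermitian vanishes), then
`Kᴴ A K` commutes with `v` and hence is diagonal. -/
theorem critical_point_conjugate_commutes_and_diagonal
    (n : ℕ) (A : Matrix (Fin n) (Fin n) ℂ) (hA : Aᴴ = A)
    (d : Fin n → ℂ) (hd : Function.Injective d)
    (K : Matrix (Fin n) (Fin n) ℂ) (hK : Kᴴ * K = 1)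
    (hcrit : ∀ X : Matrix (Fin n) (Fin n) ℂ, Xᴴ = -X →
      deriv (fun t : ℝ =>
        Matrix.trace (NormedSpace.exp ((t : ℂ) • X) * K * Matrix.diagonal d * Kᴴ *
          (NormedSpace.exp ((t : ℂ) • X))ᴴ * A)) 0 = 0) :
    ⁅Kᴴ * A * K, Matrix.diagonal d⁆ = 0 ∧
      ∀ i j, i ≠ j → (Kᴴ * A * K) i j = 0 := by
  set M : Matrix (Fin n) (Fin n) ℂ := K * Matrix.diagonal d * Kᴴ with hM
  -- the derivative condition gives trace (X * (M*A - A*M)) = 0 for skew X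
  have key : ∀ X : Matrix (Fin n) (Fin n) ℂ, Xᴴ = -X →
      ((X * (M * A - A * M)).trace = 0) := by
    intro X hX
    have hstar : ∀ t : ℝ, (NormedSpace.exp ((t : ℂ) • X))ᴴ
        = NormedSpace.exp ((t : ℂ) • Xᴴ) := by
      intro t
      rw [← Matrix.exp_conjTranspose]
      congr 1
      rw [conjTranspose_smul]
      simp
    have h1 : HasDerivAt (fun t : ℝ => NormedSpace.exp ((t : ℂ) • X)) X 0 :=
      KHKaux.hasDerivAt_exp_aux X
    have h2 : HasDerivAt (fun t : ℝ => (NormedSpace.exp ((t : ℂ) • X))ᴴ) Xᴴ 0 := by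
      have := KHKaux.hasDerivAt_exp_aux Xᴴ
      exact this.congr_of_eventuallyEq (Filter.Eventually.of_forall fun t => (hstar t))
    have hF : HasDerivAt
        (fun t : ℝ => NormedSpace.exp ((t : ℂ) • X) * K * Matrix.diagonal d * Kᴴ *
          (NormedSpace.exp ((t : ℂ) • X))ᴴ * A)
        (X * M * A + M * Xᴴ * A) 0 := by
      have hc : HasDerivAt
          (fun t : ℝ => NormedSpace.exp ((t : ℂ) • X) * K * Matrix.diagonal d * Kᴴ *
            (NormedSpace.exp ((t : ℂ) • X))ᴴ * A)
          ((X * K * Matrix.diagonal d * Kᴴ * 1 + 1 * K * Matrix.diagonal d * Kᴴ * Xᴴ) * A) 0 := by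
        have := ((((h1.mul_const K).mul_const (Matrix.diagonal d)).mul_const Kᴴ).mul
          h2).mul_const A
        simp [NormedSpace.exp_zero] at this ⊢
        exact this
      convert hc using 1
      simp only [Matrix.one_mul, Matrix.mul_one, hM]
      noncomm_ring
    have hTr : HasDerivAt
        (fun t : ℝ => Matrix.trace (NormedSpace.exp ((t : ℂ) • X) * K * Matrix.diagonal d * Kᴴ *
          (NormedSpace.exp ((t : ℂ) • X))ᴴ * A))
        ((X * M * A + M * Xᴴ * A).trace) 0 := by
      have := ((KHKaux.traceCLM n).hasFDerivAt).comp_hasDerivAt 0 hF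
      exact this
    have h0 := hcrit X hX
    rw [hTr.deriv, hX] at h0
    have e1 : M * -X * A = -(M * (X * A)) := by noncomm_ring
    have e2 : (M * (X * A)).trace = (X * (A * M)).trace := by
      rw [Matrix.trace_mul_comm M (X * A), Matrix.mul_assoc]
    calc (X * (M * A - A * M)).trace
        = (X * (M * A)).trace - (X * (A * M)).trace := by
          rw [Matrix.mul_sub, Matrix.trace_sub]
      _ = (X * M * A + M * -X * A).trace := by
          rw [Matrix.trace_add, e1, Matrix.trace_neg, e2, ← Matrix.mul_assoc]
          ring
      _ = 0 := h0
  have hC : M * A - A * M = 0 := KHKaux.eq_zero_of_skew_traces _ key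
  have hMA : M * A = A * M := sub_eq_zero.mp hC
  have hKK : K * Kᴴ = 1 := mul_eq_one_comm.mp hK
  have hK' : ∀ Z : Matrix (Fin n) (Fin n) ℂ, Kᴴ * (K * Z) = Z := fun Z => by
    rw [← Matrix.mul_assoc, hK, Matrix.one_mul]
  have hKK' : ∀ Z : Matrix (Fin n) (Fin n) ℂ, K * (Kᴴ * Z) = Z := fun Z => by
    rw [← Matrix.mul_assoc, hKK, Matrix.one_mul]
  have hcomm : (Kᴴ * A * K) * Matrix.diagonal d = Matrix.diagonal d * (Kᴴ * A * K) := by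
    have := congrArg (fun Z => Kᴴ * Z * K) hMA
    simp only [hM, Matrix.mul_assoc, hK', hKK', hK, hKK, Matrix.mul_one] at this
    simp only [Matrix.mul_assoc]
    exact this.symm
  refine ⟨by rw [Ring.lie_def, hcomm, sub_self], ?_⟩
  intro i j hij
  have := congrFun (congrFun hcomm i) j
  rw [Matrix.mul_diagonal, Matrix.diagonal_mul] at this
  have hne : d j - d i ≠ 0 := sub_ne_zero.mpr fun h => hij (hd h).symm
  have : (Kᴴ * A * K) i j * (d j - d i) = 0 := by ring_nf; linear_combination this
  exact (mul_eq_zero.mp this).resolve_right hne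
end
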